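/- For nonlinear finite Blaschke products a and b, the composition a ∘ b is totally ramified if and only if both a and b are totally ramified and the unique critical point of a equals the unique critical value of b. -/

import Mathlib

/-- The open unit disk in `ℂ`. -/
def unitDisk : Set ℂ := Metric.ball 0 1

/-- The rational function `ρ · ∏ᵢ (z - aᵢ)/(1 - conj(aᵢ)·z)`. -/
noncomputable def blaschkeFun (ρ : ℂ) (l : List ℂ) (z : ℂ) : ℂ :=
  ρ * (l.map fun a => (z - a) / (1 - (starRingEnd ℂ) a * z)).prod

/-- `f` is a finite Blaschke product of degree `n`. -/
def IsBlaschke (n : ℕ) (f : ℂ → ℂ) : Prop :=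
  ∃ (ρ : ℂ) (l : List ℂ), ‖ρ‖ = 1 ∧ (∀ a ∈ l, ‖a‖ < 1) ∧
    l.length = n ∧ ∀ z, f z = blaschkeFun ρ l z

/-- `f` is a holomorphic automorphism of the unit disk, i.e. a degree one
Blaschke product. -/
def IsDiskAut (f : ℂ → ℂ) : Prop := IsBlaschke 1 f

/-- `f` is totally ramified of degree `n`: it is associated to `z ^ n` via pre-
and post-composition with disk automorphisms. -/
def IsTotallyRamified (n : ℕ) (f : ℂ → ℂ) : Prop :=
  ∃ ε δ : ℂ → ℂ, IsDiskAut ε ∧ IsDiskAut δ ∧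
    Set.EqOn f (ε ∘ (fun z => z ^ n) ∘ δ) unitDisk

/-!
Clearing denominators, `B - w` for a Blaschke product `B = blaschkeFun ρ l` of degree `n` has
numerator `ρ ∏ (X - aᵢ) - w ∏ (1 - conj aᵢ X)`; for `‖w‖ < 1` it has degree `n` and all its roots
in the disk, because `‖B‖ ≥ 1` off the disk. Its reflection `p ↦ Xⁿ conj (p (1 / conj X))` is, up
to a unit, the numerator of `1 - conj w B`, so `φ_w ∘ B` (with `φ_w` the Blaschke factor at `w`)
is a Blaschke product vanishing exactly at those roots. Hence `B` maps the disk onto itself, and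
if `B` takes a value `w = B z₀` only at `z₀` then `φ_w ∘ B = σ φ_{z₀}ⁿ`: `B` is totally ramified
with critical point `z₀`.

If `a ∘ b = ε ∘ z^N ∘ δ`, the value `ε 0` is taken only at the zero `d` of `δ`. As `b` is onto the
disk, `b` takes `b d` only at `d` and `a` takes `a (b d)` only at `b d`, so both are totally
ramified, with critical points `d` and `b d`. Conversely, if the critical point of
`a = εₐ ∘ z^na ∘ δₐ` is the critical value `ε_b 0` of `b = ε_b ∘ z^nb ∘ δ_b`, then `δₐ ∘ ε_b` is a
disk automorphism fixing `0`, i.e. a rotation `u ↦ μ u`, and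
`a ∘ b = (u ↦ εₐ (μ^na u)) ∘ z^(na nb) ∘ δ_b`.
-/

open Polynomial ComplexConjugate Set

noncomputable def blaschkeFactor (a z : ℂ) : ℂ := (z - a) / (1 - conj a * z)

lemma blaschkeFun_nil (ρ z : ℂ) : blaschkeFun ρ [] z = ρ := by simp [blaschkeFun]

lemma blaschkeFun_cons (ρ a : ℂ) (l : List ℂ) (z : ℂ) :
    blaschkeFun ρ (a :: l) z = blaschkeFactor a z * blaschkeFun ρ l z := by
  simp only [blaschkeFun, List.map_cons, List.prod_cons, blaschkeFactor]; ring

lemma blaschkeFun_singleton (ρ a z : ℂ) :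
    blaschkeFun ρ [a] z = ρ * blaschkeFactor a z := by
  rw [blaschkeFun_cons, blaschkeFun_nil, mul_comm]

lemma blaschkeFun_replicate (ρ a : ℂ) (n : ℕ) (z : ℂ) :
    blaschkeFun ρ (List.replicate n a) z = ρ * blaschkeFactor a z ^ n := by
  simp [blaschkeFun, blaschkeFactor, List.map_replicate]

lemma mem_unitDisk {z : ℂ} : z ∈ unitDisk ↔ ‖z‖ < 1 := mem_ball_zero_iff

lemma mul_conj_of_norm_eq_one {ρ : ℂ} (hρ : ‖ρ‖ = 1) : ρ * conj ρ = 1 := by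
  rw [Complex.mul_conj', hρ]; simp

lemma one_sub_conj_mul_ne_zero {a z : ℂ} (ha : ‖a‖ < 1) (hz : ‖z‖ ≤ 1) :
    1 - conj a * z ≠ 0 := by
  rw [sub_ne_zero]
  refine fun h => (norm_one (α := ℂ)).not_lt ?_
  rw [h, norm_mul, Complex.norm_conj]
  exact (mul_le_of_le_one_right (norm_nonneg a) hz).trans_lt ha

lemma sq_norm_one_sub_conj_mul_sub_sq_norm_sub (a z : ℂ) :
    ‖1 - conj a * z‖ ^ 2 - ‖z - a‖ ^ 2 = (1 - ‖a‖ ^ 2) * (1 - ‖z‖ ^ 2) := by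
  simp only [← Complex.normSq_eq_norm_sq, Complex.normSq_apply, Complex.sub_re, Complex.sub_im,
    Complex.one_re, Complex.one_im, Complex.mul_re, Complex.mul_im, Complex.conj_re,
    Complex.conj_im]
  ring

lemma norm_blaschkeFactor_lt_one {a z : ℂ} (ha : ‖a‖ < 1) (hz : ‖z‖ < 1) :
    ‖blaschkeFactor a z‖ < 1 := by
  rw [blaschkeFactor, norm_div, div_lt_one (norm_pos_iff.2 (one_sub_conj_mul_ne_zero ha hz.le))]
  refine (pow_lt_pow_iff_left₀ (norm_nonneg _) (norm_nonneg _) two_ne_zero).1 ?_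
  have hid := sq_norm_one_sub_conj_mul_sub_sq_norm_sub a z
  have hpos : 0 < (1 - ‖a‖ ^ 2) * (1 - ‖z‖ ^ 2) := by
    apply mul_pos <;> nlinarith [norm_nonneg a, norm_nonneg z]
  linarith

lemma one_le_norm_blaschkeFactor {a z : ℂ} (ha : ‖a‖ < 1) (hz : 1 ≤ ‖z‖)
    (hd : 1 - conj a * z ≠ 0) : 1 ≤ ‖blaschkeFactor a z‖ := by
  rw [blaschkeFactor, norm_div, one_le_div (norm_pos_iff.2 hd)]
  refine (pow_le_pow_iff_left₀ (norm_nonneg _) (norm_nonneg _) two_ne_zero).1 ?_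
  have hid := sq_norm_one_sub_conj_mul_sub_sq_norm_sub a z
  have hnonpos : (1 - ‖a‖ ^ 2) * (1 - ‖z‖ ^ 2) ≤ 0 := by
    apply mul_nonpos_of_nonneg_of_nonpos <;> nlinarith [norm_nonneg a, norm_nonneg z]
  linarith

section

variable {ρ : ℂ} {l : List ℂ}

lemma norm_blaschkeFun_le_one (hρ : ‖ρ‖ = 1) (hl : ∀ a ∈ l, ‖a‖ < 1) {z : ℂ}
    (hz : ‖z‖ < 1) : ‖blaschkeFun ρ l z‖ ≤ 1 := by
  induction l with
  | nil => simp [blaschkeFun_nil, hρ]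
  | cons a l ih =>
    rw [blaschkeFun_cons, norm_mul]
    simp only [List.forall_mem_cons] at hl
    exact mul_le_one₀ (norm_blaschkeFactor_lt_one hl.1 hz).le (norm_nonneg _) (ih hl.2)

lemma norm_blaschkeFun_lt_one (hρ : ‖ρ‖ = 1) (hl : ∀ a ∈ l, ‖a‖ < 1) (hne : l ≠ [])
    {z : ℂ} (hz : ‖z‖ < 1) : ‖blaschkeFun ρ l z‖ < 1 := by
  obtain ⟨a, l, rfl⟩ := List.exists_cons_of_ne_nil hne
  simp only [List.forall_mem_cons] at hl
  rw [blaschkeFun_cons, norm_mul]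
  exact mul_lt_one_of_nonneg_of_lt_one_left (norm_nonneg _)
    (norm_blaschkeFactor_lt_one hl.1 hz) (norm_blaschkeFun_le_one hρ hl.2 hz)

lemma one_le_norm_blaschkeFun (hρ : ‖ρ‖ = 1) (hl : ∀ a ∈ l, ‖a‖ < 1) {z : ℂ}
    (hz : 1 ≤ ‖z‖) (hd : ∀ a ∈ l, 1 - conj a * z ≠ 0) : 1 ≤ ‖blaschkeFun ρ l z‖ := by
  induction l with
  | nil => simp [blaschkeFun_nil, hρ]
  | cons a l ih =>
    rw [blaschkeFun_cons, norm_mul]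
    simp only [List.forall_mem_cons] at hl hd
    exact one_le_mul_of_one_le_of_one_le (one_le_norm_blaschkeFactor hl.1 hz hd.1)
      (ih hl.2 hd.2)

noncomputable def blaschkeNum (l : List ℂ) : ℂ[X] := (l.map fun a => X - C a).prod

noncomputable def blaschkeDen (l : List ℂ) : ℂ[X] :=
  (l.map fun a => 1 - C (conj a) * X).prod

lemma blaschkeNum_cons (a : ℂ) (l : List ℂ) :
    blaschkeNum (a :: l) = (X - C a) * blaschkeNum l :=
  List.prod_cons

lemma blaschkeDen_cons (a : ℂ) (l : List ℂ) :
    blaschkeDen (a :: l) = (1 - C (conj a) * X) * blaschkeDen l :=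
  List.prod_cons

lemma blaschkeFun_eq_div (ρ : ℂ) (l : List ℂ) (z : ℂ) :
    blaschkeFun ρ l z = ρ * (blaschkeNum l).eval z / (blaschkeDen l).eval z := by
  induction l with
  | nil => simp [blaschkeFun_nil, blaschkeNum, blaschkeDen]
  | cons a l ih =>
    rw [blaschkeFun_cons, ih, blaschkeNum_cons, blaschkeDen_cons, blaschkeFactor,
      div_mul_div_comm]
    simp only [eval_mul, eval_sub, eval_X, eval_C, eval_one]
    ring

lemma eval_blaschkeDen_ne_zero_iff {z : ℂ} :
    (blaschkeDen l).eval z ≠ 0 ↔ ∀ a ∈ l, 1 - conj a * z ≠ 0 := by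
  simp [blaschkeDen, eval_list_prod, List.prod_eq_zero_iff]

lemma eval_blaschkeDen_ne_zero (hl : ∀ a ∈ l, ‖a‖ < 1) {z : ℂ} (hz : ‖z‖ ≤ 1) :
    (blaschkeDen l).eval z ≠ 0 :=
  eval_blaschkeDen_ne_zero_iff.2 fun a ha => one_sub_conj_mul_ne_zero (hl a ha) hz

lemma eval_blaschkeNum_eq_zero_iff {z : ℂ} : (blaschkeNum l).eval z = 0 ↔ z ∈ l := by
  simp [blaschkeNum, eval_list_prod, List.prod_eq_zero_iff, sub_eq_zero]

lemma blaschkeNum_monic (l : List ℂ) : (blaschkeNum l).Monic := by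
  induction l with
  | nil => exact monic_one
  | cons a l ih => rw [blaschkeNum_cons]; exact (monic_X_sub_C a).mul ih

lemma natDegree_blaschkeNum (l : List ℂ) : (blaschkeNum l).natDegree = l.length := by
  induction l with
  | nil => simp [blaschkeNum]
  | cons a l ih =>
    rw [blaschkeNum_cons, (monic_X_sub_C a).natDegree_mul (blaschkeNum_monic l), ih,
      natDegree_X_sub_C, List.length_cons, add_comm]

lemma blaschkeDen_eq_reflect (l : List ℂ) :
    blaschkeDen l = ((blaschkeNum l).map (starRingEnd ℂ)).reflect l.length := by
  induction l with
  | nil => simp [blaschkeNum, blaschkeDen]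
  | cons a l ih =>
    rw [blaschkeDen_cons, blaschkeNum_cons, Polynomial.map_mul, List.length_cons, add_comm,
      reflect_mul _ _ (by simp) (by rw [natDegree_map, natDegree_blaschkeNum]), ih]
    simp [reflect_sub, reflect_C]

lemma natDegree_blaschkeDen_le (l : List ℂ) : (blaschkeDen l).natDegree ≤ l.length := by
  rw [blaschkeDen_eq_reflect]
  refine natDegree_reflect_le.trans ?_
  rw [natDegree_map, natDegree_blaschkeNum, max_self]

lemma blaschkeNum_eq_reflect (l : List ℂ) :
    blaschkeNum l = ((blaschkeDen l).map (starRingEnd ℂ)).reflect l.length := by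
  induction l with
  | nil => simp [blaschkeNum, blaschkeDen]
  | cons a l ih =>
    rw [blaschkeDen_cons, blaschkeNum_cons, Polynomial.map_mul, List.length_cons, add_comm,
      reflect_mul _ _ ?_ (by rw [natDegree_map]; exact natDegree_blaschkeDen_le l), ih]
    · simp [reflect_sub]
    · rw [natDegree_map]
      exact (natDegree_sub_le _ _).trans
        (by simpa using (natDegree_C_mul_le _ X).trans natDegree_X_le)

lemma eval_blaschkeDen_zero (l : List ℂ) : (blaschkeDen l).eval 0 = 1 := by
  simp [blaschkeDen, eval_list_prod, Function.comp_def]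

lemma norm_eval_zero_blaschkeNum_le_one (hl : ∀ a ∈ l, ‖a‖ < 1) :
    ‖(blaschkeNum l).eval 0‖ ≤ 1 := by
  have := norm_blaschkeFun_le_one (norm_one (α := ℂ)) hl (z := 0) (by simp)
  rwa [blaschkeFun_eq_div, eval_blaschkeDen_zero, one_mul, div_one] at this

/-- The numerator of `blaschkeFun ρ l - w`. -/
noncomputable def blaschkeLevelNum (ρ : ℂ) (l : List ℂ) (w : ℂ) : ℂ[X] :=
  C ρ * blaschkeNum l - C w * blaschkeDen l

variable {w : ℂ}

lemma coeff_blaschkeLevelNum_length_ne_zero (hρ : ‖ρ‖ = 1) (hw : ‖w‖ < 1)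
    (hl : ∀ a ∈ l, ‖a‖ < 1) : (blaschkeLevelNum ρ l w).coeff l.length ≠ 0 := by
  have hP : (blaschkeNum l).coeff l.length = 1 := by
    simpa [natDegree_blaschkeNum] using (blaschkeNum_monic l).coeff_natDegree
  have hQ : (blaschkeDen l).coeff l.length = conj ((blaschkeNum l).eval 0) := by
    rw [blaschkeDen_eq_reflect, coeff_reflect, revAt_le le_rfl, Nat.sub_self, coeff_map,
      coeff_zero_eq_eval_zero]
  rw [blaschkeLevelNum, coeff_sub, coeff_C_mul, coeff_C_mul, hP, hQ, mul_one, sub_ne_zero]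
  intro h
  have hnorm := congrArg norm h
  rw [hρ, norm_mul, Complex.norm_conj] at hnorm
  exact ((mul_le_of_le_one_right (norm_nonneg w)
    (norm_eval_zero_blaschkeNum_le_one hl)).trans_lt hw).ne hnorm.symm

lemma natDegree_blaschkeLevelNum (hρ : ‖ρ‖ = 1) (hw : ‖w‖ < 1) (hl : ∀ a ∈ l, ‖a‖ < 1) :
    (blaschkeLevelNum ρ l w).natDegree = l.length := by
  refine le_antisymm ?_ (le_natDegree_of_ne_zero (coeff_blaschkeLevelNum_length_ne_zero hρ hw hl))
  refine (natDegree_sub_le _ _).trans (max_le ?_ ?_)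
  · exact (natDegree_C_mul_le _ _).trans (natDegree_blaschkeNum l).le
  · exact (natDegree_C_mul_le _ _).trans (natDegree_blaschkeDen_le l)

lemma blaschkeLevelNum_ne_zero (hρ : ‖ρ‖ = 1) (hw : ‖w‖ < 1) (hl : ∀ a ∈ l, ‖a‖ < 1) :
    blaschkeLevelNum ρ l w ≠ 0 :=
  fun h => coeff_blaschkeLevelNum_length_ne_zero hρ hw hl (by rw [h, coeff_zero])

lemma blaschkeFun_eq_iff_isRoot {z : ℂ} (hz : (blaschkeDen l).eval z ≠ 0) :
    blaschkeFun ρ l z = w ↔ (blaschkeLevelNum ρ l w).IsRoot z := by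
  simp only [IsRoot, blaschkeLevelNum, eval_sub, eval_mul, eval_C]
  rw [blaschkeFun_eq_div, div_eq_iff hz, sub_eq_zero]

lemma norm_lt_one_of_isRoot_blaschkeLevelNum (hρ : ‖ρ‖ = 1) (hw : ‖w‖ < 1)
    (hl : ∀ a ∈ l, ‖a‖ < 1) {z : ℂ} (hz : (blaschkeLevelNum ρ l w).IsRoot z) : ‖z‖ < 1 := by
  by_contra! hz1
  by_cases hQ : (blaschkeDen l).eval z = 0
  · have hρ0 : ρ ≠ 0 := ne_zero_of_norm_ne_zero (by simp [hρ])
    simp only [IsRoot, blaschkeLevelNum, eval_sub, eval_mul, eval_C, hQ, mul_zero, sub_zero,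
      mul_eq_zero, hρ0, false_or, eval_blaschkeNum_eq_zero_iff] at hz
    exact hz1.not_gt (hl z hz)
  · have h := one_le_norm_blaschkeFun hρ hl hz1 (eval_blaschkeDen_ne_zero_iff.1 hQ)
    rw [(blaschkeFun_eq_iff_isRoot hQ).2 hz] at h
    exact h.not_gt hw

lemma exists_blaschkeLevelNum_eq_C_mul_blaschkeNum (hρ : ‖ρ‖ = 1) (hw : ‖w‖ < 1)
    (hl : ∀ a ∈ l, ‖a‖ < 1) :
    ∃ (c : ℂ) (r : List ℂ), c ≠ 0 ∧ r.length = l.length ∧ (∀ x ∈ r, ‖x‖ < 1) ∧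
      blaschkeLevelNum ρ l w = C c * blaschkeNum r := by
  set F := blaschkeLevelNum ρ l w
  have hF : F ≠ 0 := blaschkeLevelNum_ne_zero hρ hw hl
  have hsplit : F.Splits := IsAlgClosed.splits F
  refine ⟨F.leadingCoeff, F.roots.toList, leadingCoeff_ne_zero.2 hF, ?_, fun x hx => ?_, ?_⟩
  · rw [Multiset.length_toList, ← hsplit.natDegree_eq_card_roots,
      natDegree_blaschkeLevelNum hρ hw hl]
  · exact norm_lt_one_of_isRoot_blaschkeLevelNum hρ hw hl
      ((mem_roots hF).1 (Multiset.mem_toList.1 hx))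
  · conv_lhs => rw [hsplit.eq_prod_roots]
    rw [blaschkeNum, ← Multiset.prod_coe, ← Multiset.map_coe, Multiset.coe_toList]

lemma blaschkeDen_sub_eq (hρ : ‖ρ‖ = 1) {c : ℂ} {r : List ℂ} (hlen : r.length = l.length)
    (h : blaschkeLevelNum ρ l w = C c * blaschkeNum r) :
    blaschkeDen l - C (ρ * conj w) * blaschkeNum l = C (ρ * conj c) * blaschkeDen r := by
  have hr : ((blaschkeNum r).map (starRingEnd ℂ)).reflect l.length = blaschkeDen r := by
    rw [← hlen, blaschkeDen_eq_reflect]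
  have h' := congrArg (fun p => (p.map (starRingEnd ℂ)).reflect l.length) h
  simp only [blaschkeLevelNum, Polynomial.map_sub, Polynomial.map_mul, map_C, reflect_sub,
    reflect_C_mul, ← blaschkeDen_eq_reflect, ← blaschkeNum_eq_reflect, hr] at h'
  have hρρ : C ρ * C (conj ρ) = 1 := by rw [← C_mul, mul_conj_of_norm_eq_one hρ, C_1]
  rw [C_mul, C_mul]
  linear_combination C ρ * h' - blaschkeDen l * hρρ

lemma exists_blaschkeFactor_comp_eq (hρ : ‖ρ‖ = 1) (hw : ‖w‖ < 1) (hl : ∀ a ∈ l, ‖a‖ < 1) :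
    ∃ (σ : ℂ) (r : List ℂ), ‖σ‖ = 1 ∧ r.length = l.length ∧ (∀ x ∈ r, ‖x‖ < 1) ∧
      ∀ z ∈ unitDisk, blaschkeFactor w (blaschkeFun ρ l z) = blaschkeFun σ r z := by
  obtain ⟨c, r, hc, hlen, hr, hF⟩ := exists_blaschkeLevelNum_eq_C_mul_blaschkeNum hρ hw hl
  have hG := blaschkeDen_sub_eq hρ hlen hF
  refine ⟨c / (ρ * conj c), r, ?_, hlen, hr, fun z hz => ?_⟩
  · rw [norm_div, norm_mul, Complex.norm_conj, hρ, one_mul, div_self (norm_ne_zero_iff.2 hc)]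
  have hQl := eval_blaschkeDen_ne_zero hl (mem_unitDisk.1 hz).le
  have hF' := congrArg (eval z) hF
  have hG' := congrArg (eval z) hG
  simp only [blaschkeLevelNum, eval_sub, eval_mul, eval_C] at hF' hG'
  rw [blaschkeFactor, blaschkeFun_eq_div, blaschkeFun_eq_div]
  calc (ρ * (blaschkeNum l).eval z / (blaschkeDen l).eval z - w)
        / (1 - conj w * (ρ * (blaschkeNum l).eval z / (blaschkeDen l).eval z))
      = (ρ * (blaschkeNum l).eval z - w * (blaschkeDen l).eval z)
        / ((blaschkeDen l).eval z - ρ * conj w * (blaschkeNum l).eval z) := by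
        rw [← mul_div_mul_right _ _ hQl]
        congr 1 <;> field_simp
    _ = c / (ρ * conj c) * (blaschkeNum r).eval z / (blaschkeDen r).eval z := by
        rw [hF', hG']; ring

lemma blaschkeFun_eq_zero_of_mem {x : ℂ} (hx : x ∈ l) : blaschkeFun ρ l x = 0 := by
  rw [blaschkeFun_eq_div, eval_blaschkeNum_eq_zero_iff.2 hx, mul_zero, zero_div]

lemma IsBlaschke.mapsTo {n : ℕ} {f : ℂ → ℂ} (hn : n ≠ 0) (hf : IsBlaschke n f) :
    MapsTo f unitDisk unitDisk := by
  obtain ⟨ρ, l, hρ, hl, rfl, hf⟩ := hf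
  intro z hz
  rw [mem_unitDisk, hf]
  exact norm_blaschkeFun_lt_one hρ hl (List.ne_nil_of_length_pos (Nat.pos_of_ne_zero hn))
    (mem_unitDisk.1 hz)

lemma IsBlaschke.surjOn {n : ℕ} {f : ℂ → ℂ} (hn : n ≠ 0) (hf : IsBlaschke n f) :
    SurjOn f unitDisk unitDisk := by
  obtain ⟨ρ, l, hρ, hl, rfl, hf⟩ := hf
  intro w hw
  rw [mem_unitDisk] at hw
  obtain ⟨z, hz⟩ := IsAlgClosed.exists_root (blaschkeLevelNum ρ l w) fun h =>
    hn (by rw [← natDegree_blaschkeLevelNum hρ hw hl]; exact natDegree_eq_of_degree_eq_some h)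
  have hz1 := norm_lt_one_of_isRoot_blaschkeLevelNum hρ hw hl hz
  refine ⟨z, mem_unitDisk.2 hz1, ?_⟩
  rw [hf, blaschkeFun_eq_iff_isRoot (eval_blaschkeDen_ne_zero hl hz1.le)]
  exact hz

end

lemma blaschkeFactor_self (e : ℂ) : blaschkeFactor e e = 0 := by simp [blaschkeFactor]

lemma blaschkeFactor_zero_right (e : ℂ) : blaschkeFactor e 0 = -e := by simp [blaschkeFactor]

lemma blaschkeFactor_neg_mul_mul_blaschkeFactor {ρ e z : ℂ} (hρ : ‖ρ‖ = 1) (he : ‖e‖ < 1)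
    (hz : ‖z‖ ≤ 1) : blaschkeFactor (-(ρ * e)) (ρ * blaschkeFactor e z) = ρ * z := by
  have hD := one_sub_conj_mul_ne_zero he hz
  have hE := one_sub_conj_mul_ne_zero he he.le
  have hρρ := mul_conj_of_norm_eq_one hρ
  have hnum : ρ * ((z - e) / (1 - conj e * z)) - -(ρ * e)
      = ρ * z * (1 - conj e * e) / (1 - conj e * z) := by
    rw [eq_div_iff hD, sub_mul, mul_assoc, div_mul_cancel₀ _ hD]; ring
  have hden : 1 - -(conj ρ * conj e) * (ρ * ((z - e) / (1 - conj e * z)))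
      = (1 - conj e * e) / (1 - conj e * z) := by
    field_simp; linear_combination (z - e) * conj e * hρρ
  simp only [blaschkeFactor, map_neg, map_mul]
  rw [hnum, hden, div_div_div_cancel_right₀ hD, mul_div_cancel_right₀ _ hE]

lemma isDiskAut_iff {f : ℂ → ℂ} :
    IsDiskAut f ↔ ∃ ρ e : ℂ, ‖ρ‖ = 1 ∧ ‖e‖ < 1 ∧ ∀ z, f z = ρ * blaschkeFactor e z := by
  simp only [IsDiskAut, IsBlaschke, List.length_eq_one_iff]
  constructor
  · rintro ⟨ρ, _, hρ, hl, ⟨e, rfl⟩, hf⟩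
    exact ⟨ρ, e, hρ, hl e (List.mem_singleton_self e),
      fun z => (hf z).trans (blaschkeFun_singleton ρ e z)⟩
  · rintro ⟨ρ, e, hρ, he, hf⟩
    exact ⟨ρ, [e], hρ, by simpa using he, ⟨e, rfl⟩,
      fun z => (hf z).trans (blaschkeFun_singleton ρ e z).symm⟩

lemma isDiskAut_blaschkeFactor {e : ℂ} (he : ‖e‖ < 1) : IsDiskAut (blaschkeFactor e) :=
  isDiskAut_iff.2 ⟨1, e, norm_one, he, fun _ => (one_mul _).symm⟩

namespace IsDiskAut

variable {f : ℂ → ℂ}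

lemma mapsTo (hf : IsDiskAut f) : MapsTo f unitDisk unitDisk :=
  IsBlaschke.mapsTo one_ne_zero hf

lemma injOn (hf : IsDiskAut f) : InjOn f unitDisk := by
  obtain ⟨ρ, e, hρ, he, hf⟩ := isDiskAut_iff.1 hf
  intro z hz u hu h
  have hinv : ∀ x ∈ unitDisk, blaschkeFactor (-(ρ * e)) (f x) = ρ * x := fun x hx => by
    rw [hf, blaschkeFactor_neg_mul_mul_blaschkeFactor hρ he (mem_unitDisk.1 hx).le]
  have hρ0 : ρ ≠ 0 := ne_zero_of_norm_ne_zero (by simp [hρ])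
  exact mul_left_cancel₀ hρ0 ((hinv z hz).symm.trans (h ▸ hinv u hu))

lemma exists_eq_zero (hf : IsDiskAut f) : ∃ d ∈ unitDisk, f d = 0 := by
  obtain ⟨ρ, e, -, he, hf⟩ := isDiskAut_iff.1 hf
  exact ⟨e, mem_unitDisk.2 he, by rw [hf, blaschkeFactor_self, mul_zero]⟩

lemma comp_mul_left (hf : IsDiskAut f) {μ : ℂ} (hμ : ‖μ‖ = 1) :
    IsDiskAut (fun u => f (μ * u)) := by
  obtain ⟨ρ, e, hρ, he, hf⟩ := isDiskAut_iff.1 hf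
  refine isDiskAut_iff.2 ⟨ρ * μ, conj μ * e, by simp [hρ, hμ], by simpa [hμ] using he,
    fun u => ?_⟩
  have hμμ := mul_conj_of_norm_eq_one hμ
  have hnum : μ * u - e = μ * (u - conj μ * e) := by linear_combination e * hμμ
  rw [hf, blaschkeFactor, blaschkeFactor, map_mul, Complex.conj_conj, hnum]
  ring

lemma comp_eq_mul {g : ℂ → ℂ} (hf : IsDiskAut f) (hg : IsDiskAut g) (h0 : f (g 0) = 0) :
    ∃ μ : ℂ, ‖μ‖ = 1 ∧ ∀ u ∈ unitDisk, f (g u) = μ * u := by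
  obtain ⟨ρ, e, hρ, he, hf'⟩ := isDiskAut_iff.1 hf
  have hg0 : g 0 = e := hf.injOn (hg.mapsTo (mem_unitDisk.2 (by simp))) (mem_unitDisk.2 he)
    (by rw [h0, hf', blaschkeFactor_self, mul_zero])
  obtain ⟨σ, c, hσ, hc, hg⟩ := isDiskAut_iff.1 hg
  rw [hg, blaschkeFactor_zero_right, mul_neg] at hg0
  refine ⟨ρ * σ, by simp [hρ, hσ], fun u hu => ?_⟩
  rw [hg, hf', ← hg0, blaschkeFactor_neg_mul_mul_blaschkeFactor hσ hc (mem_unitDisk.1 hu).le,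
    mul_assoc]

lemma hasDerivAt (hf : IsDiskAut f) {z : ℂ} (hz : z ∈ unitDisk) :
    ∃ f', HasDerivAt f f' z ∧ f' ≠ 0 := by
  obtain ⟨ρ, e, hρ, he, hf⟩ := isDiskAut_iff.1 hf
  have hD := one_sub_conj_mul_ne_zero he (mem_unitDisk.1 hz).le
  have hρ0 : ρ ≠ 0 := ne_zero_of_norm_ne_zero (by simp [hρ])
  have hderiv := (((hasDerivAt_id z).sub_const e).div
    (((hasDerivAt_id z).const_mul (conj e)).const_sub 1) hD).const_mul ρ
  refine ⟨_, hderiv.congr_of_eventuallyEq (Filter.Eventually.of_forall hf),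
    mul_ne_zero hρ0 (div_ne_zero ?_ (pow_ne_zero _ hD))⟩
  convert one_sub_conj_mul_ne_zero he he.le using 1
  simp only [id]
  ring

end IsDiskAut

lemma pow_mem_unitDisk {z : ℂ} (hz : z ∈ unitDisk) {n : ℕ} (hn : n ≠ 0) :
    z ^ n ∈ unitDisk := by
  rw [mem_unitDisk, norm_pow] at *
  exact pow_lt_one₀ (norm_nonneg z) hz hn

lemma deriv_eq_zero_iff_of_eqOn {f ε δ : ℂ → ℂ} {n : ℕ} (hε : IsDiskAut ε) (hδ : IsDiskAut δ)
    (hn : 2 ≤ n) (hf : EqOn f (ε ∘ (fun z => z ^ n) ∘ δ) unitDisk) {d : ℂ} (hd : d ∈ unitDisk)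
    (hδd : δ d = 0) {p : ℂ} (hp : p ∈ unitDisk) : deriv f p = 0 ↔ p = d := by
  obtain ⟨δ', hδ', hδ'0⟩ := hδ.hasDerivAt hp
  obtain ⟨ε', hε', hε'0⟩ :=
    hε.hasDerivAt (pow_mem_unitDisk (hδ.mapsTo hp) (n := n) (by omega))
  have hf' := (hε'.comp p ((hasDerivAt_pow n (δ p)).comp p hδ')).congr_of_eventuallyEq
    (hf.eventuallyEq_of_mem (Metric.isOpen_ball.mem_nhds hp))
  rw [hf'.deriv, ← hδ.injOn.eq_iff hp hd, hδd]
  simp [hε'0, hδ'0, pow_eq_zero_iff (show n - 1 ≠ 0 by omega), show n ≠ 0 by omega]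

lemma IsBlaschke.eqOn_comp_pow_blaschkeFactor {n : ℕ} {f : ℂ → ℂ} (hn : n ≠ 0)
    (hf : IsBlaschke n f) {z₀ : ℂ} (hz₀ : z₀ ∈ unitDisk)
    (huniq : ∀ u ∈ unitDisk, f u = f z₀ → u = z₀) :
    ∃ ε, IsDiskAut ε ∧ EqOn f (ε ∘ (fun z => z ^ n) ∘ blaschkeFactor z₀) unitDisk := by
  have hmaps := hf.mapsTo hn
  have hw := mem_unitDisk.1 (hmaps hz₀)
  obtain ⟨ρ, l, hρ, hl, rfl, hf⟩ := hf
  obtain ⟨σ, r, hσ, hlen, hr, hcomp⟩ := exists_blaschkeFactor_comp_eq hρ hw hl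
  have hr_eq : r = List.replicate l.length z₀ := by
    refine List.eq_replicate_iff.2 ⟨hlen, fun x hx => ?_⟩
    have hxD := mem_unitDisk.2 (hr x hx)
    have h := hcomp x hxD
    rw [blaschkeFun_eq_zero_of_mem hx, blaschkeFactor, div_eq_zero_iff, sub_eq_zero, ← hf] at h
    exact huniq x hxD
      (h.resolve_right (one_sub_conj_mul_ne_zero hw (mem_unitDisk.1 (hmaps hxD)).le))
  refine ⟨fun t => blaschkeFactor (-f z₀) (σ * t),
    (isDiskAut_blaschkeFactor (by rwa [norm_neg])).comp_mul_left hσ, fun z hz => ?_⟩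
  simp only [Function.comp_apply]
  rw [← blaschkeFun_replicate, ← hr_eq, ← hcomp z hz, ← hf]
  simpa using (blaschkeFactor_neg_mul_mul_blaschkeFactor (ρ := 1) norm_one hw
    (mem_unitDisk.1 (hmaps hz)).le).symm

lemma IsTotallyRamified.exists_forall_eq_of_apply_eq {n : ℕ} {f : ℂ → ℂ} (hn : n ≠ 0)
    (hf : IsTotallyRamified n f) : ∃ d ∈ unitDisk, ∀ u ∈ unitDisk, f u = f d → u = d := by
  obtain ⟨ε, δ, hε, hδ, hf⟩ := hf
  obtain ⟨d, hd, hδd⟩ := hδ.exists_eq_zero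
  refine ⟨d, hd, fun u hu h => ?_⟩
  have hu' := pow_mem_unitDisk (hδ.mapsTo hu) hn
  simp only [hf hu, hf hd, Function.comp_apply, hδd, zero_pow hn] at h
  have h0 : δ u ^ n = 0 := hε.injOn hu' (mem_unitDisk.2 (by simp)) h
  exact hδ.injOn hu hd ((pow_eq_zero_iff hn).1 h0 |>.trans hδd.symm)

lemma IsTotallyRamified.comp {a b : ℂ → ℂ} {na nb : ℕ} (hna : 2 ≤ na) (hnb : 2 ≤ nb)
    (ha : IsTotallyRamified na a) (hb : IsTotallyRamified nb b)
    (hcrit : ∀ p z : ℂ, p ∈ unitDisk → z ∈ unitDisk →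
      deriv a p = 0 → deriv b z = 0 → p = b z) :
    IsTotallyRamified (na * nb) (a ∘ b) := by
  obtain ⟨εa, δa, hεa, hδa, ha⟩ := ha
  obtain ⟨εb, δb, hεb, hδb, hb⟩ := hb
  obtain ⟨p, hp, hδap⟩ := hδa.exists_eq_zero
  obtain ⟨z, hz, hδbz⟩ := hδb.exists_eq_zero
  have hpz : p = b z := hcrit p z hp hz
    ((deriv_eq_zero_iff_of_eqOn hεa hδa hna ha hp hδap hp).2 rfl)
    ((deriv_eq_zero_iff_of_eqOn hεb hδb hnb hb hz hδbz hz).2 rfl)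
  have hbz : b z = εb 0 := by
    rw [hb hz, Function.comp_apply, Function.comp_apply, hδbz, zero_pow (by omega)]
  obtain ⟨μ, hμ, hδε⟩ := hδa.comp_eq_mul hεb (by rw [← hbz, ← hpz, hδap])
  refine ⟨fun t => εa (μ ^ na * t), δb, hεa.comp_mul_left (by simp [hμ]), hδb, fun u hu => ?_⟩
  have ht := pow_mem_unitDisk (hδb.mapsTo hu) (n := nb) (by omega)
  simp only [Function.comp_apply]
  rw [hb hu, Function.comp_apply, Function.comp_apply, ha (hεb.mapsTo ht)]
  simp only [Function.comp_apply]
  rw [hδε _ ht, mul_pow, ← pow_mul, mul_comm nb na]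

/-- For nonlinear finite Blaschke products `a` (degree `na ≥ 2`)
and `b` (degree `nb ≥ 2`), the composition `a ∘ b` is totally ramified iff both
`a` and `b` are totally ramified and the unique critical point of `a` in the
disk equals the unique critical value of `b` (encoded: every critical point `p`
of `a` in the disk equals `b z` for every critical point `z` of `b` in the
disk). -/
theorem stmt_10 (a b : ℂ → ℂ) (na nb : ℕ) (hna : 2 ≤ na) (hnb : 2 ≤ nb)
    (ha : IsBlaschke na a) (hb : IsBlaschke nb b) :
    IsTotallyRamified (na * nb) (a ∘ b) ↔
      (IsTotallyRamified na a ∧ IsTotallyRamified nb b ∧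
        ∀ p z : ℂ, p ∈ unitDisk → z ∈ unitDisk →
          deriv a p = 0 → deriv b z = 0 → p = b z) := by
  refine ⟨fun hab => ?_, fun ⟨hTa, hTb, hcrit⟩ => hTa.comp hna hnb hTb hcrit⟩
  obtain ⟨d, hd, hfib⟩ := hab.exists_forall_eq_of_apply_eq (by positivity)
  have hbd : b d ∈ unitDisk := hb.mapsTo (by omega) hd
  have hb_fib : ∀ u ∈ unitDisk, b u = b d → u = d := fun u hu h =>
    hfib u hu (by rw [Function.comp_apply, h, Function.comp_apply])
  have ha_fib : ∀ u ∈ unitDisk, a u = a (b d) → u = b d := by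
    rintro u hu h
    obtain ⟨z, hz, rfl⟩ := hb.surjOn (by omega) hu
    rw [hfib z hz h]
  obtain ⟨εa, hεa, ha'⟩ := ha.eqOn_comp_pow_blaschkeFactor (by omega) hbd ha_fib
  obtain ⟨εb, hεb, hb'⟩ := hb.eqOn_comp_pow_blaschkeFactor (by omega) hd hb_fib
  have hδa := isDiskAut_blaschkeFactor (mem_unitDisk.1 hbd)
  have hδb := isDiskAut_blaschkeFactor (mem_unitDisk.1 hd)
  refine ⟨⟨εa, _, hεa, hδa, ha'⟩, ⟨εb, _, hεb, hδb, hb'⟩, fun p z hp hz hap hbz => ?_⟩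
  rw [deriv_eq_zero_iff_of_eqOn hεa hδa hna ha' hbd (blaschkeFactor_self _) hp] at hap
  rw [deriv_eq_zero_iff_of_eqOn hεb hδb hnb hb' hd (blaschkeFactor_self _) hz] at hbz
  rw [hap, hbz]
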